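/- Fix a real number α > −1 and let A(x) = Σ_{m=0}^∞ (−x)^m/(m! Γ(α+1+m)) (an entire function of x; one has x^{α/2} A(x) = J_α(2√x) in terms of the classical Bessel function). Then for all x, y > 0 with x ≠ y, the limit kernel at θ = 1 satisfies 𝒦^{(α,1)}(x,y) = [y · A(x) A'(y) − x · A(y) A'(x)] / (x − y); i.e., (xy)^{α/2} 𝒦^{(α,1)}(x,y) is the classical Bessel kernel. -/

import Mathlib

/-- The limit kernel `𝒦^{(α,θ)}(x,y)` of the biorthogonal Jacobi/Laguerre ensembles. -/
noncomputable def limitKernel (α θ x y : ℝ) : ℝ :=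
  ∑' k : ℕ, ∑' l : ℕ,
    ((-1) ^ k * x ^ k / ((Nat.factorial k : ℝ) * Real.Gamma ((α + 1 + k) / θ))) *
      ((-1) ^ l * y ^ (θ * (l : ℝ)) /
        ((Nat.factorial l : ℝ) * Real.Gamma (α + 1 + θ * l))) *
      (θ / (α + 1 + k + θ * l))

/-- The entire function `A(x) = ∑ (-x)^m / (m! Γ(α + 1 + m))`, so that
`x^{α/2} A(x) = J_α(2√x)`. -/
noncomputable def besselA (α : ℝ) (x : ℝ) : ℝ :=
  ∑' m : ℕ, (-x) ^ m / ((Nat.factorial m : ℝ) * Real.Gamma (α + 1 + m))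

/-!
Write `a_m(z) = (-z)^m / (m! Γ(α+1+m))`, so that `A = ∑ a_m` and `𝒦^{(α,1)}(x,y)` is the double
series `∑ a_k(x) a_l(y) / (α+1+k+l)`. The recurrence `z a_m(z) = -(m+1)(α+1+m) a_{m+1}(z)` turns
`x 𝒦` and `y 𝒦`, after a shift of `k` resp. `l`, into double series of `a_k(x) a_l(y)` with weights
`-k(α+k)/(α+k+l)` resp. `-l(α+l)/(α+k+l)`. Since `l(α+l) - k(α+k) = (l-k)(α+k+l)`, the series
for `(x - y) 𝒦` has weight `l - k` and factors as `A(x) · y A'(y) - x A'(x) · A(y)`.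
-/

open Real Filter Nat

lemma tsum_nat_succ_eq_tsum {M : Type*} [AddCommMonoid M] [TopologicalSpace M] {f : ℕ → M}
    (h0 : f 0 = 0) : ∑' n, f (n + 1) = ∑' n, f n :=
  Nat.succ_injective.tsum_eq fun n hn => by
    obtain ⟨m, rfl⟩ := Nat.exists_eq_succ_of_ne_zero (n := n) (by rintro rfl; exact hn h0)
    exact ⟨m, rfl⟩

lemma tsum_tsum_natCast_sub_mul {b c : ℕ → ℝ} (hb : Summable b)
    (hb' : Summable fun k : ℕ => (k : ℝ) * b k) (hc : Summable c)
    (hc' : Summable fun l : ℕ => (l : ℝ) * c l) :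
    ∑' (k : ℕ) (l : ℕ), ((l : ℝ) - k) * (b k * c l) =
      (∑' k, b k) * (∑' l : ℕ, l * c l) - (∑' k : ℕ, k * b k) * ∑' l, c l := by
  have row : ∀ k : ℕ, ∑' l : ℕ, ((l : ℝ) - k) * (b k * c l) =
      b k * (∑' l : ℕ, l * c l) - k * b k * ∑' l, c l := fun k => by
    rw [← tsum_mul_left, ← tsum_mul_left, ← (hc'.mul_left _).tsum_sub (hc.mul_left _)]
    exact tsum_congr fun l => by ring
  rw [tsum_congr row, (hb.mul_right _).tsum_sub (hb'.mul_right _), tsum_mul_right,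
    tsum_mul_right]

lemma eventually_one_le_Gamma_add_nat (α : ℝ) : ∀ᶠ m : ℕ in atTop, 1 ≤ Gamma (α + 1 + m) := by
  filter_upwards [eventually_ge_atTop ⌈1 - α⌉₊] with m hm
  have h2 : (2 : ℝ) ≤ α + 1 + m := by linarith [Nat.ceil_le.mp hm]
  simpa [Gamma_two] using Gamma_strictMonoOn_Ici.monotoneOn Set.self_mem_Ici h2 h2

lemma summable_succ_mul_pow_div_factorial_mul_abs_Gamma (α : ℝ) {R : ℝ} (hR : 0 ≤ R) :
    Summable fun m : ℕ => ((m : ℝ) + 1) * R ^ m / (m ! * |Gamma (α + 1 + m)|) := by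
  refine (summable_pow_div_factorial (2 * R)).of_norm_bounded_eventually_nat ?_
  filter_upwards [eventually_one_le_Gamma_add_nat α] with m hΓ
  have hm : (m : ℝ) + 1 ≤ 2 ^ m := by exact_mod_cast Nat.lt_two_pow_self
  rw [norm_of_nonneg (by positivity), abs_of_pos (by linarith)]
  calc ((m : ℝ) + 1) * R ^ m / (m ! * Gamma (α + 1 + m))
      ≤ ((m : ℝ) + 1) * R ^ m / m ! :=
        div_le_div_of_nonneg_left (by positivity) (by positivity)
          (le_mul_of_one_le_right (by positivity) hΓ)
    _ ≤ 2 ^ m * R ^ m / m ! := by gcongr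
    _ = (2 * R) ^ m / m ! := by rw [mul_pow]

noncomputable def besselCoeff (α z : ℝ) (m : ℕ) : ℝ :=
  (-z) ^ m / (m ! * Gamma (α + 1 + m))

section BesselCoeff

variable (α : ℝ)

lemma abs_besselCoeff (z : ℝ) (m : ℕ) :
    |besselCoeff α z m| = |z| ^ m / (m ! * |Gamma (α + 1 + m)|) := by
  rw [besselCoeff, abs_div, abs_mul, abs_pow, abs_neg, Nat.abs_cast]

lemma summable_succ_mul_abs_besselCoeff (z : ℝ) :
    Summable fun m : ℕ => ((m : ℝ) + 1) * |besselCoeff α z m| :=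
  (summable_succ_mul_pow_div_factorial_mul_abs_Gamma α (abs_nonneg z)).congr fun m => by
    rw [abs_besselCoeff, mul_div_assoc]

lemma summable_abs_besselCoeff (z : ℝ) : Summable fun m : ℕ => |besselCoeff α z m| :=
  (summable_succ_mul_abs_besselCoeff α z).of_nonneg_of_le (fun _ => abs_nonneg _) fun m =>
    le_mul_of_one_le_left (abs_nonneg _) (by linarith [m.cast_nonneg (α := ℝ)])

lemma summable_natCast_mul_abs_besselCoeff (z : ℝ) :
    Summable fun m : ℕ => (m : ℝ) * |besselCoeff α z m| :=
  (summable_succ_mul_abs_besselCoeff α z).of_nonneg_of_le (fun _ => by positivity) fun _ =>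
    mul_le_mul_of_nonneg_right (by linarith) (abs_nonneg _)

lemma summable_besselCoeff (z : ℝ) : Summable (besselCoeff α z) :=
  (summable_abs_besselCoeff α z).of_abs

lemma summable_natCast_mul_besselCoeff (z : ℝ) :
    Summable fun m : ℕ => (m : ℝ) * besselCoeff α z m :=
  .of_abs <| (summable_natCast_mul_abs_besselCoeff α z).congr fun m => by
    rw [abs_mul, Nat.abs_cast]

lemma hasDerivAt_besselCoeff (m : ℕ) (z : ℝ) :
    HasDerivAt (fun w => besselCoeff α w m)
      (-(m * (-z) ^ (m - 1)) / (m ! * Gamma (α + 1 + m))) z := by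
  unfold besselCoeff
  simpa using ((hasDerivAt_pow m (-z)).comp z (hasDerivAt_neg z)).div_const
    ((m ! : ℝ) * Gamma (α + 1 + m))

lemma norm_deriv_besselCoeff_le (m : ℕ) {R z : ℝ} (hR : 1 ≤ R) (hz : |z| ≤ R) :
    ‖-(m * (-z) ^ (m - 1)) / (m ! * Gamma (α + 1 + m))‖ ≤
      ((m : ℝ) + 1) * R ^ m / (m ! * |Gamma (α + 1 + m)|) := by
  have hpow : |z| ^ (m - 1) ≤ R ^ m :=
    (pow_le_pow_left₀ (abs_nonneg z) hz _).trans (pow_le_pow_right₀ hR (Nat.sub_le m 1))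
  rw [norm_eq_abs, abs_div, abs_neg, abs_mul, abs_mul, Nat.abs_cast, Nat.abs_cast, abs_pow,
    abs_neg]
  exact div_le_div_of_nonneg_right
    (mul_le_mul (by linarith) hpow (by positivity) (by positivity)) (by positivity)

lemma hasDerivAt_besselA (z : ℝ) :
    HasDerivAt (besselA α) (∑' m : ℕ, -(m * (-z) ^ (m - 1)) / (m ! * Gamma (α + 1 + m))) z := by
  have hR : 1 ≤ |z| + 1 := by linarith [abs_nonneg z]
  have hz : z ∈ Metric.ball (0 : ℝ) (|z| + 1) := by simp
  have hball : ∀ w ∈ Metric.ball (0 : ℝ) (|z| + 1), |w| ≤ |z| + 1 := fun w hw => by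
    simpa using (mem_ball_zero_iff.mp hw).le
  exact hasDerivAt_tsum_of_isPreconnected
    (summable_succ_mul_pow_div_factorial_mul_abs_Gamma α (zero_le_one.trans hR))
    Metric.isOpen_ball (convex_ball _ _).isPreconnected
    (fun m w _ => hasDerivAt_besselCoeff α m w)
    (fun m w hw => norm_deriv_besselCoeff_le α m hR (hball w hw))
    hz (summable_besselCoeff α z) hz

lemma mul_deriv_besselA (z : ℝ) :
    z * deriv (besselA α) z = ∑' m : ℕ, m * besselCoeff α z m := by
  rw [(hasDerivAt_besselA α z).deriv, ← tsum_mul_left]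
  refine tsum_congr fun m => ?_
  rcases m with _ | m
  · simp
  · rw [besselCoeff, pow_succ, Nat.add_sub_cancel]
    ring

variable {α}

lemma mul_besselCoeff (hα : -1 < α) (z : ℝ) (m : ℕ) :
    z * besselCoeff α z m = -((m + 1) * (α + 1 + m) * besselCoeff α z (m + 1)) := by
  have hpos : 0 < α + 1 + m := by linarith [m.cast_nonneg (α := ℝ)]
  have hΓ : Gamma (α + 1 + ↑(m + 1)) = (α + 1 + m) * Gamma (α + 1 + m) := by
    rw [Nat.cast_succ, ← add_assoc, Gamma_add_one hpos.ne']
  have : 0 < Gamma (α + 1 + m) := Gamma_pos_of_pos hpos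
  rw [besselCoeff, besselCoeff, hΓ, pow_succ, Nat.factorial_succ, Nat.cast_mul]
  field_simp
  push_cast
  ring

end BesselCoeff

lemma limitKernel_one_eq_tsum (α x y : ℝ) :
    limitKernel α 1 x y =
      ∑' (k : ℕ) (l : ℕ), besselCoeff α x k * besselCoeff α y l / (α + 1 + k + l) := by
  refine tsum_congr fun k => tsum_congr fun l => ?_
  simp only [besselCoeff, div_one, one_mul, rpow_natCast, neg_pow x, neg_pow y]
  ring

noncomputable def kernelWeight (α : ℝ) (p q : ℕ) : ℝ :=
  p * (α + p) / (α + p + q)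

section KernelWeight

variable {α : ℝ}

lemma abs_kernelWeight_mul_le (hα : -1 < α) (p q : ℕ) (b : ℝ) :
    |kernelWeight α p q * b| ≤ p * |b| := by
  rw [abs_mul]
  refine mul_le_mul_of_nonneg_right ?_ (abs_nonneg b)
  rcases p.eq_zero_or_pos with rfl | hp
  · simp [kernelWeight]
  have hp1 : (1 : ℝ) ≤ p := by exact_mod_cast hp
  have h1 : 0 < α + p := by linarith
  have h2 : α + p ≤ α + p + q := by linarith [q.cast_nonneg (α := ℝ)]
  rw [kernelWeight, abs_div, abs_mul, Nat.abs_cast, abs_of_pos h1, abs_of_pos (h1.trans_le h2),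
    div_le_iff₀ (h1.trans_le h2)]
  exact mul_le_mul_of_nonneg_left h2 (by positivity)

lemma kernelWeight_sub_kernelWeight (hα : -1 < α) (k l : ℕ) :
    kernelWeight α l k - kernelWeight α k l = l - k := by
  rcases eq_or_ne (α + k + l) 0 with h | h
  · have hkl : k + l < 1 := by
      have : (k : ℝ) + l < 1 := by linarith
      exact_mod_cast this
    obtain ⟨rfl, rfl⟩ : k = 0 ∧ l = 0 := by omega
    simp [kernelWeight]
  · rw [kernelWeight, kernelWeight, add_right_comm α (l : ℝ), div_sub_div_same, div_eq_iff h]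
    ring

end KernelWeight

section KernelSeries

variable {α : ℝ}

lemma summable_kernelWeight_mul_besselCoeff (hα : -1 < α) (x y : ℝ) :
    Summable fun p : ℕ × ℕ =>
      kernelWeight α p.1 p.2 * (besselCoeff α x p.1 * besselCoeff α y p.2) :=
  ((summable_natCast_mul_abs_besselCoeff α x).mul_of_nonneg (summable_abs_besselCoeff α y)
    (fun _ => by positivity) (fun _ => abs_nonneg _)).of_norm_bounded fun _ =>
      (abs_kernelWeight_mul_le hα _ _ _).trans_eq (by rw [abs_mul]; ring)

lemma summable_kernelWeight_swap_mul_besselCoeff (hα : -1 < α) (x y : ℝ) :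
    Summable fun p : ℕ × ℕ =>
      kernelWeight α p.2 p.1 * (besselCoeff α x p.1 * besselCoeff α y p.2) :=
  ((summable_abs_besselCoeff α x).mul_of_nonneg (summable_natCast_mul_abs_besselCoeff α y)
    (fun _ => abs_nonneg _) (fun _ => by positivity)).of_norm_bounded fun _ =>
      (abs_kernelWeight_mul_le hα _ _ _).trans_eq (by rw [abs_mul]; ring)

lemma mul_limitKernel_one_left (hα : -1 < α) (x y : ℝ) :
    x * limitKernel α 1 x y =
      -∑' (k : ℕ) (l : ℕ), kernelWeight α k l * (besselCoeff α x k * besselCoeff α y l) := by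
  rw [limitKernel_one_eq_tsum, ← tsum_mul_left, ← tsum_neg]
  conv_rhs => rw [← tsum_nat_succ_eq_tsum (by simp [kernelWeight])]
  refine tsum_congr fun k => ?_
  rw [← tsum_mul_left, ← tsum_neg]
  refine tsum_congr fun l => ?_
  rw [mul_div_assoc', ← mul_assoc, mul_besselCoeff hα, kernelWeight]
  push_cast
  ring

lemma mul_limitKernel_one_right (hα : -1 < α) (x y : ℝ) :
    y * limitKernel α 1 x y =
      -∑' (k : ℕ) (l : ℕ), kernelWeight α l k * (besselCoeff α x k * besselCoeff α y l) := by
  rw [limitKernel_one_eq_tsum, ← tsum_mul_left, ← tsum_neg]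
  refine tsum_congr fun k => ?_
  rw [← tsum_mul_left, ← tsum_neg]
  conv_rhs => rw [← tsum_nat_succ_eq_tsum (by simp [kernelWeight])]
  refine tsum_congr fun l => ?_
  rw [mul_div_assoc', mul_left_comm, mul_besselCoeff hα, kernelWeight]
  push_cast
  ring

lemma sub_mul_limitKernel_one (hα : -1 < α) (x y : ℝ) :
    (x - y) * limitKernel α 1 x y =
      besselA α x * (∑' l : ℕ, l * besselCoeff α y l) -
        (∑' k : ℕ, k * besselCoeff α x k) * besselA α y := by
  have hG := summable_kernelWeight_mul_besselCoeff hα x y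
  have hH := summable_kernelWeight_swap_mul_besselCoeff hα x y
  rw [sub_mul, mul_limitKernel_one_left hα, mul_limitKernel_one_right hα, neg_sub_neg,
    ← hH.prod.tsum_sub hG.prod]
  calc _ = ∑' (k : ℕ) (l : ℕ), ((l : ℝ) - k) * (besselCoeff α x k * besselCoeff α y l) :=
        tsum_congr fun k => by
          rw [← (hH.prod_factor k).tsum_sub (hG.prod_factor k)]
          exact tsum_congr fun l => by rw [← sub_mul, kernelWeight_sub_kernelWeight hα]
    _ = _ := tsum_tsum_natCast_sub_mul (summable_besselCoeff α x)
        (summable_natCast_mul_besselCoeff α x) (summable_besselCoeff α y)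
        (summable_natCast_mul_besselCoeff α y)

end KernelSeries

theorem limitKernel_theta_one_eq_bessel_kernel (α : ℝ) (hα : -1 < α)
    (x y : ℝ) (hxy : x ≠ y) :
    limitKernel α 1 x y =
      (y * besselA α x * deriv (besselA α) y -
        x * besselA α y * deriv (besselA α) x) / (x - y) := by
  rw [eq_div_iff (sub_ne_zero.mpr hxy), mul_comm, sub_mul_limitKernel_one hα,
    ← mul_deriv_besselA, ← mul_deriv_besselA]
  ring
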